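/- Define a relation ∼ on the node set of an edge-weighted directed graph G without negative-weight closed walks by: i ∼ j iff i = j or there exists a zero-weight closed walk in G traversing both i and j. Then ∼ is an equivalence relation. -/

import Mathlib

/-- `l` is a walk in edge set `E`: a nonempty list of vertices with consecutive edges. -/
def IsWalk {V : Type*} (E : Set (V × V)) (l : List V) : Prop :=
  l ≠ [] ∧ l.Chain' (fun a b => (a, b) ∈ E)

/-- The weight of a walk: sum of edge weights along consecutive pairs (with multiplicity). -/
def walkWeight {V : Type*} (c : V → V → ℝ) (l : List V) : ℝ :=
  ((l.zip l.tail).map fun p => c p.1 p.2).sum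

/-- `l` is a walk from `u` to `v`. -/
def IsWalkFrom {V : Type*} (E : Set (V × V)) (u v : V) (l : List V) : Prop :=
  IsWalk E l ∧ l.head? = some u ∧ l.getLast? = some v

/-- A closed walk: a walk with at least one edge whose first and last vertices agree. -/
def IsClosedWalk {V : Type*} (E : Set (V × V)) (l : List V) : Prop :=
  IsWalk E l ∧ 2 ≤ l.length ∧ l.head? = l.getLast?

/-- A simple path from `u` to `v`: a walk with all traversed vertices distinct. -/
def IsPathFrom {V : Type*} (E : Set (V × V)) (u v : V) (l : List V) : Prop :=
  IsWalkFrom E u v l ∧ l.Nodup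

/-- A cycle: a closed walk all of whose vertices other than the repeated endpoint are distinct. -/
def IsCycle {V : Type*} (E : Set (V × V)) (l : List V) : Prop :=
  IsClosedWalk E l ∧ l.tail.Nodup

/-- `x` satisfies the precedence relation system of `(V, E, c)`. -/
def Satisfies {V : Type*} (E : Set (V × V)) (c : V → V → ℝ) (x : V → ℝ) : Prop :=
  ∀ e ∈ E, x e.1 - x e.2 ≤ c e.1 e.2

/-- `R` is a redundant edge set of `(V, E, c)`: every edge of `R` has a replacement path
in the reduced graph of no greater weight. -/
def IsRedundantEdgeSet {V : Type*} (E : Set (V × V)) (c : V → V → ℝ)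
    (R : Set (V × V)) : Prop :=
  R ⊆ E ∧ ∀ e ∈ R, ∃ l, IsPathFrom (E \ R) e.1 e.2 l ∧ walkWeight c l ≤ c e.1 e.2

/-- `w` is the minimum weight of a walk from `i` to `j` in `(V, E, c)` (attained). -/
def IsMinWalkWeight {V : Type*} (E : Set (V × V)) (c : V → V → ℝ) (i j : V) (w : ℝ) : Prop :=
  (∃ l, IsWalkFrom E i j l ∧ walkWeight c l = w) ∧
  ∀ l, IsWalkFrom E i j l → w ≤ walkWeight c l

/-- The relation `∼`: `i ∼ j` iff `i = j` or some zero-weight closed walk traverses both. -/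
def Sim {V : Type*} (E : Set (V × V)) (c : V → V → ℝ) (i j : V) : Prop :=
  i = j ∨ ∃ l, IsClosedWalk E l ∧ walkWeight c l = 0 ∧ i ∈ l ∧ j ∈ l

/-!
Given zero-weight closed walks through `i, j` and through `j, k`, rotate both so that they
start (and end) at `j`, then traverse one after the other. The result is a closed walk of
weight `0 + 0` through `i` and `k`.
-/

section

variable {V : Type*} {E : Set (V × V)}

@[simp]
lemma walkWeight_cons_cons (c : V → V → ℝ) (x y : V) (l : List V) :
    walkWeight c (x :: y :: l) = c x y + walkWeight c (y :: l) := by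
  simp [walkWeight]

lemma walkWeight_append_cons (c : V → V → ℝ) (xs : List V) (a : V) (ys : List V) :
    walkWeight c (xs ++ a :: ys) = walkWeight c (xs ++ [a]) + walkWeight c (a :: ys) := by
  induction xs with
  | nil => simp [walkWeight]
  | cons x xs ih =>
    cases xs with
    | nil => simp [walkWeight]
    | cons y xs => simp only [List.cons_append, walkWeight_cons_cons] at ih ⊢; rw [ih, add_assoc]

lemma isWalk_append_cons {xs : List V} {a : V} {ys : List V} :
    IsWalk E (xs ++ a :: ys) ↔ IsWalk E (xs ++ [a]) ∧ IsWalk E (a :: ys) := by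
  constructor
  · rintro ⟨-, h⟩
    exact ⟨⟨by simp, (List.isChain_split.1 h).1⟩, List.cons_ne_nil _ _, (List.isChain_split.1 h).2⟩
  · rintro ⟨⟨-, h₁⟩, -, h₂⟩
    exact ⟨by simp, List.isChain_split.2 ⟨h₁, h₂⟩⟩

lemma head?_append_cons (xs : List V) (a : V) (ys : List V) :
    (xs ++ a :: ys).head? = (xs ++ [a]).head? := by
  cases xs <;> rfl

lemma mem_append_cons {x : V} {xs : List V} {a : V} {ys : List V} :
    x ∈ xs ++ a :: ys ↔ x ∈ xs ++ [a] ∨ x ∈ a :: ys := by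
  simp only [List.mem_append, List.mem_cons, List.not_mem_nil]
  tauto

lemma IsClosedWalk.exists_rotate (c : V → V → ℝ) {l : List V} {j : V} (hl : IsClosedWalk E l) (hj : j ∈ l) :
    ∃ l', IsClosedWalk E l' ∧ l'.head? = some j ∧ walkWeight c l' = walkWeight c l ∧ l ⊆ l' := by
  obtain ⟨p, q, rfl⟩ := List.append_of_mem hj
  obtain ⟨hwalk, hlen, hclosed⟩ := hl
  obtain ⟨a, s, hps⟩ : ∃ a s, p ++ [j] = a :: s := by
    cases p <;> exact ⟨_, _, rfl⟩
  have hhead : (p ++ j :: q).head? = some a := by rw [head?_append_cons, hps]; rfl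
  -- `a`, the base point of `l = p ++ j :: q`, is also the last vertex of `j :: q`.
  obtain ⟨r, hqr⟩ : ∃ r, j :: q = r ++ [a] := by
    rw [← List.getLast?_eq_some_iff, ← List.getLast?_append_cons p, ← hclosed, hhead]
  rw [isWalk_append_cons, hps, hqr] at hwalk
  -- The rotated walk traverses `j :: q = r ++ [a]`, then `p ++ [j] = a :: s`.
  refine ⟨r ++ a :: s, ⟨isWalk_append_cons.2 hwalk.symm, ?_, ?_⟩, ?_, ?_, ?_⟩
  · have : (p ++ j :: q).length = (r ++ a :: s).length := by
      have h₁ := congrArg List.length hps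
      have h₂ := congrArg List.length hqr
      simp only [List.length_append, List.length_cons, List.length_nil] at h₁ h₂ ⊢
      omega
    omega
  · rw [head?_append_cons, ← hqr, List.getLast?_append_cons, ← hps, List.getLast?_append]
    rfl
  · rw [head?_append_cons, ← hqr]; rfl
  · rw [walkWeight_append_cons c r, walkWeight_append_cons c p, hps, hqr, add_comm]
  · intro x hx
    rw [mem_append_cons, hps, hqr] at hx
    exact mem_append_cons.2 hx.symm

lemma IsClosedWalk.append_cons {xs : List V} {j : V} {ys : List V}
    (h₁ : IsClosedWalk E (xs ++ [j])) (h₂ : IsClosedWalk E (j :: ys)) :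
    IsClosedWalk E (xs ++ j :: ys) := by
  refine ⟨isWalk_append_cons.2 ⟨h₁.1, h₂.1⟩, ?_, ?_⟩
  · have := h₂.2.1
    simp only [List.length_append, List.length_cons] at this ⊢
    omega
  · rw [head?_append_cons, h₁.2.2, List.getLast?_append_cons, List.getLast?_append_cons,
      ← h₂.2.2]
    rfl

lemma Sim.symm {c : V → V → ℝ} {i j : V} (h : Sim E c i j) : Sim E c j i := by
  rcases h with rfl | ⟨l, hl, hw, hi, hj⟩
  · exact Or.inl rfl
  · exact Or.inr ⟨l, hl, hw, hj, hi⟩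

lemma Sim.trans {c : V → V → ℝ} {i j k : V} (hij : Sim E c i j) (hjk : Sim E c j k) : Sim E c i k := by
  rcases hij with rfl | ⟨l₁, hl₁, hw₁, hi, hj₁⟩
  · exact hjk
  rcases hjk with rfl | ⟨l₂, hl₂, hw₂, hj₂, hk⟩
  · exact Or.inr ⟨l₁, hl₁, hw₁, hi, hj₁⟩
  obtain ⟨m₁, hm₁, hhead₁, hw₁', hsub₁⟩ := hl₁.exists_rotate c hj₁
  obtain ⟨m₂, hm₂, hhead₂, hw₂', hsub₂⟩ := hl₂.exists_rotate c hj₂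
  obtain ⟨xs, rfl⟩ : ∃ xs, m₁ = xs ++ [j] := by
    rw [← List.getLast?_eq_some_iff, ← hm₁.2.2, hhead₁]
  obtain ⟨ys, rfl⟩ := List.head?_eq_some_iff.1 hhead₂
  refine Or.inr ⟨xs ++ j :: ys, hm₁.append_cons hm₂, ?_, ?_, ?_⟩
  · rw [walkWeight_append_cons, hw₁', hw₂', hw₁, hw₂, add_zero]
  · exact mem_append_cons.2 (Or.inl (hsub₁ hi))
  · exact mem_append_cons.2 (Or.inr (hsub₂ hk))

end

theorem stmt9_general {V : Type*} (E : Set (V × V)) (c : V → V → ℝ) :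
    Equivalence (Sim E c) :=
  ⟨fun _ => Or.inl rfl, Sim.symm, Sim.trans⟩

theorem stmt9 {V : Type*} (E : Set (V × V)) (c : V → V → ℝ)
    (hnn : ∀ l : List V, IsClosedWalk E l → 0 ≤ walkWeight c l) :
    Equivalence (Sim E c) :=
  stmt9_general E c
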